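/- Let A ∈ ℝ^{n×n} have distinct eigenvalues μ_1,...,μ_m of A* with algebraic multiplicities n_1,...,n_m, and let U_κ ∈ ℂ^{n×n_κ} be full column rank with range U_κ = null(A* − μ_κ I_n)^{n_κ}, so A* U_κ = U_κ A_κ* for some A_κ ∈ ℂ^{n_κ×n_κ}. Let 𝐀 = I_q ⊗ A, 𝐁 ∈ ℝ^{qn×p}, 𝐖 = [𝐁 𝐀𝐁 ⋯ 𝐀^{n-1}𝐁], 𝐁_κ = [I_q ⊗ U_κ*]𝐁, and 𝐖_κ = [𝐁_κ (I_q⊗A_κ)𝐁_κ ⋯ (I_q⊗A_κ)^{n_κ−1}𝐁_κ]. Then null 𝐖_κ* = null(𝐖*[I_q ⊗ U_κ]). -/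

import Mathlib

/-!
Conjugating the intertwining relation `A* U = U A_κ*` gives `[I ⊗ U*] 𝐀 = (I ⊗ A_κ) [I ⊗ U*]`,
hence `[I ⊗ U*] 𝐖 = (𝐖* [I ⊗ U])*` is the controllability matrix of `(I ⊗ A_κ, 𝐁_κ)` truncated
at power `n − 1`. By Cayley–Hamilton, `I ⊗ A_κ` is annihilated by the degree-`n_κ` characteristic
polynomial of `A_κ`, so every power `(I ⊗ A_κ)^r` is a combination of the powers below `n_κ`;
since `n_κ ≤ n` (as `U` has full column rank), truncating at `n_κ − 1` or at `n − 1` gives the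
same left null space.
-/

open Matrix Kronecker Polynomial

/-- Controllability matrix `[B  MB  ⋯  M^{N-1}B]` over ℂ. -/
noncomputable def ctrbC {ι J : Type*} [Fintype ι] [DecidableEq ι]
    (M : Matrix ι ι ℂ) (B : Matrix ι J ℂ) (N : ℕ) : Matrix ι (Fin N × J) ℂ :=
  Matrix.of fun x rσ => ((M ^ (rσ.1 : ℕ)) * B) x rσ.2

section PowersOfAlgebraicElement

variable {R S V : Type*} [CommRing R] [Ring S] [Algebra R S] [AddCommMonoid V] [Module R V]

theorem pow_mem_span_pow_of_aeval_eq_zero [Nontrivial R] {x : S} {p : R[X]} (hp : p.Monic)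
    (hx : aeval x p = 0) (r : ℕ) :
    x ^ r ∈ Submodule.span R (Set.range fun i : Fin p.natDegree => x ^ (i : ℕ)) :=
  PowerBasis.mem_span_pow'.mpr
    ⟨X ^ r %ₘ p, (degree_modByMonic_lt _ hp).trans_le degree_le_natDegree,
      by rw [aeval_modByMonic_eq_self_of_root hx, aeval_X_pow]⟩

theorem map_pow_eq_zero_of_aeval_eq_zero [Nontrivial R] {x : S} {p : R[X]} (hp : p.Monic)
    (hx : aeval x p = 0) (φ : S →ₗ[R] V) (hφ : ∀ i < p.natDegree, φ (x ^ i) = 0) (r : ℕ) :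
    φ (x ^ r) = 0 := by
  have hspan : Submodule.span R (Set.range fun i : Fin p.natDegree => x ^ (i : ℕ)) ≤
      LinearMap.ker φ :=
    Submodule.span_le.mpr <| Set.range_subset_iff.mpr fun i => hφ i i.isLt
  exact hspan (pow_mem_span_pow_of_aeval_eq_zero hp hx r)

end PowersOfAlgebraicElement

def oneKroneckerAlgHom (ι : Type*) {κ R : Type*} [Fintype ι] [DecidableEq ι] [Fintype κ]
    [DecidableEq κ] [CommSemiring R] : Matrix κ κ R →ₐ[R] Matrix (ι × κ) (ι × κ) R where
  toFun K := (1 : Matrix ι ι R) ⊗ₖ K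
  map_one' := one_kronecker_one
  map_mul' K L := by rw [← mul_kronecker_mul, Matrix.one_mul]
  map_zero' := kronecker_zero _
  map_add' := kronecker_add _
  commutes' c := by
    rw [Algebra.algebraMap_eq_smul_one, Algebra.algebraMap_eq_smul_one, kronecker_smul,
      one_kronecker_one]

section Controllability

variable {ι ι' J : Type*} [Fintype ι] [DecidableEq ι]

theorem conjTranspose_ctrbC_mulVec_eq_zero_iff (M : Matrix ι ι ℂ) (B : Matrix ι J ℂ) (N : ℕ)
    (x : ι → ℂ) : (ctrbC M B N)ᴴ *ᵥ x = 0 ↔ ∀ r < N, star x ᵥ* (M ^ r * B) = 0 := by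
  rw [← star_eq_zero, star_mulVec, conjTranspose_conjTranspose]
  constructor
  · intro h r hr
    funext σ
    exact congrFun h (⟨r, hr⟩, σ)
  · intro h
    funext rσ
    exact congrFun (h rσ.1 rσ.1.isLt) rσ.2

theorem mul_ctrbC_of_mul_eq [Fintype ι'] [DecidableEq ι'] {A : Matrix ι ι ℂ}
    {M : Matrix ι' ι' ℂ} {Z : Matrix ι' ι ℂ} (hZ : Z * A = M * Z) (B : Matrix ι J ℂ) (N : ℕ) :
    Z * ctrbC A B N = ctrbC M (Z * B) N := by
  have hpow : ∀ r : ℕ, Z * A ^ r = M ^ r * Z := by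
    intro r
    induction r with
    | zero => simp
    | succ r ih => rw [pow_succ, ← Matrix.mul_assoc, ih, Matrix.mul_assoc, hZ,
        ← Matrix.mul_assoc, ← pow_succ]
  ext i rσ
  change (Z * (A ^ (rσ.1 : ℕ) * B)) i rσ.2 = (M ^ (rσ.1 : ℕ) * (Z * B)) i rσ.2
  rw [← Matrix.mul_assoc, hpow, Matrix.mul_assoc]

theorem conjTranspose_ctrbC_mulVec_eq_zero_iff_of_aeval_eq_zero {M : Matrix ι ι ℂ} {p : ℂ[X]}
    (hp : p.Monic) (hM : aeval M p = 0) (B : Matrix ι J ℂ) {N : ℕ} (hN : p.natDegree ≤ N)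
    (x : ι → ℂ) : (ctrbC M B N)ᴴ *ᵥ x = 0 ↔ (ctrbC M B p.natDegree)ᴴ *ᵥ x = 0 := by
  simp only [conjTranspose_ctrbC_mulVec_eq_zero_iff]
  refine ⟨fun h r hr => h r (hr.trans_le hN), fun h r _ => ?_⟩
  let φ : Matrix ι ι ℂ →ₗ[ℂ] J → ℂ :=
    { toFun := fun T => star x ᵥ* (T * B)
      map_add' := fun S T => by rw [Matrix.add_mul, vecMul_add]
      map_smul' := fun c T => by rw [Matrix.smul_mul, vecMul_smul, RingHom.id_apply] }
  exact map_pow_eq_zero_of_aeval_eq_zero hp hM φ h r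

end Controllability

theorem stmt10_general (n q p nκ : ℕ)
    (A : Matrix (Fin n) (Fin n) ℝ)
    (U : Matrix (Fin n) (Fin nκ) ℂ)
    (hUrank : Function.Injective U.mulVec)
    (Aκ : Matrix (Fin nκ) (Fin nκ) ℂ)
    (hcomm : (A.map (Complex.ofReal))ᴴ * U = U * Aκᴴ)
    (B : Matrix (Fin q × Fin n) (Fin p) ℝ) :
    {x : Fin q × Fin nκ → ℂ |
        (ctrbC ((1 : Matrix (Fin q) (Fin q) ℂ) ⊗ₖ Aκ)
          (((1 : Matrix (Fin q) (Fin q) ℂ) ⊗ₖ Uᴴ) * (B.map (Complex.ofReal))) nκ)ᴴ.mulVec x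
          = 0} =
    {x : Fin q × Fin nκ → ℂ |
        ((ctrbC ((1 : Matrix (Fin q) (Fin q) ℂ) ⊗ₖ (A.map (Complex.ofReal)))
            (B.map (Complex.ofReal)) n)ᴴ *
          ((1 : Matrix (Fin q) (Fin q) ℂ) ⊗ₖ U)).mulVec x = 0} := by
  have hle : nκ ≤ n := by
    simpa using LinearMap.finrank_le_finrank_of_injective (f := U.mulVecLin) hUrank
  have hintertwine : ((1 : Matrix (Fin q) (Fin q) ℂ) ⊗ₖ Uᴴ) *
      ((1 : Matrix (Fin q) (Fin q) ℂ) ⊗ₖ A.map Complex.ofReal) =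
      ((1 : Matrix (Fin q) (Fin q) ℂ) ⊗ₖ Aκ) * ((1 : Matrix (Fin q) (Fin q) ℂ) ⊗ₖ Uᴴ) := by
    have h := congrArg conjTranspose hcomm
    simp only [conjTranspose_mul, conjTranspose_conjTranspose] at h
    rw [← mul_kronecker_mul, ← mul_kronecker_mul, h]
  have hannihilate : aeval ((1 : Matrix (Fin q) (Fin q) ℂ) ⊗ₖ Aκ) Aκ.charpoly = 0 := by
    rw [show (1 : Matrix (Fin q) (Fin q) ℂ) ⊗ₖ Aκ = oneKroneckerAlgHom (Fin q) Aκ from rfl,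
      aeval_algHom_apply, aeval_self_charpoly, map_zero]
  have hdeg : Aκ.charpoly.natDegree = nκ := by simp [charpoly_natDegree_eq_dim]
  ext x
  rw [Set.mem_ofPred_eq, Set.mem_ofPred_eq, ← conjTranspose_conjTranspose (1 ⊗ₖ U),
    ← conjTranspose_mul, conjTranspose_kronecker, conjTranspose_one,
    mul_ctrbC_of_mul_eq hintertwine,
    conjTranspose_ctrbC_mulVec_eq_zero_iff_of_aeval_eq_zero (charpoly_monic Aκ) hannihilate _
      (hdeg.trans_le hle), hdeg]

/-- Lemma on generalized eigenspace projections: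
`null 𝐖_κ* = null(𝐖*[I_q ⊗ U_κ])`, where `U_κ` is a full-column-rank basis of the
generalized eigenspace `null(A* − μ_κ I)^{n_κ}`, `A*U_κ = U_κ A_κ*`, `A_κ*` has
characteristic polynomial `(s − μ_κ)^{n_κ}`, `𝐁_κ = [I_q ⊗ U_κ*]𝐁`, and
`𝐖_κ` is the controllability matrix of `(I_q ⊗ A_κ, 𝐁_κ)` truncated at power `n_κ − 1`. -/
theorem stmt10 (n q p nκ : ℕ) (hq : 2 ≤ q)
    (A : Matrix (Fin n) (Fin n) ℝ) (μ : ℂ)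
    (U : Matrix (Fin n) (Fin nκ) ℂ)
    (hUrank : Function.Injective U.mulVec)
    (hUrange : ∀ x : Fin n → ℂ,
      (∃ y, U.mulVec y = x) ↔
        ((((A.map (Complex.ofReal))ᴴ - μ • 1) ^ nκ).mulVec x = 0))
    (Aκ : Matrix (Fin nκ) (Fin nκ) ℂ)
    (hcomm : (A.map (Complex.ofReal))ᴴ * U = U * Aκᴴ)
    (hchar : (Aκᴴ).charpoly = (X - C μ) ^ nκ)
    (B : Matrix (Fin q × Fin n) (Fin p) ℝ)
    (hB : ∀ σ (j : Fin n), ∑ i : Fin q, B (i, j) σ = 0) :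
    {x : Fin q × Fin nκ → ℂ |
        (ctrbC ((1 : Matrix (Fin q) (Fin q) ℂ) ⊗ₖ Aκ)
          (((1 : Matrix (Fin q) (Fin q) ℂ) ⊗ₖ Uᴴ) * (B.map (Complex.ofReal))) nκ)ᴴ.mulVec x
          = 0} =
    {x : Fin q × Fin nκ → ℂ |
        ((ctrbC ((1 : Matrix (Fin q) (Fin q) ℂ) ⊗ₖ (A.map (Complex.ofReal)))
            (B.map (Complex.ofReal)) n)ᴴ *
          ((1 : Matrix (Fin q) (Fin q) ℂ) ⊗ₖ U)).mulVec x = 0} :=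
  stmt10_general n q p nκ A U hUrank Aκ hcomm B
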